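/- Let r₁, r₂ > 0 and θ₂, β ∈ ℝ, set c = e^{iβ}, a₁ = r₁, a₂ = r₂e^{iθ₂}, and let A₀,…,A₄ be the coefficients of the polynomial P(z) = (z - a₁)(z + 1/conj(a₁))(z - a₂)(z + 1/conj(a₂)). If conj(c·A₁) = -c·A₃, Im(c·A₂) = 0, and e^{2i(β+θ₂)} = -1, then r₁ = 1, r₂ = 1, e^{iθ₂} ∈ {i, -i}, and c ∈ {1, -1}. (Hence the Henneberg surface H₁ is the only surface with complexity m = 1 that solves the period problem and descends to a 1-sided quotient, after normalizing a₁ to be real and positive.) -/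

import Mathlib

open Polynomial ComplexConjugate

/-!
Write `a₂ = r₂ w` with `w = e^{iθ₂}` and `sⱼ = rⱼ - rⱼ⁻¹`. Since `1 / conj (r w) = r⁻¹ w` for `|w| = 1`,
`P = (X² - s₁ X - 1)(X² - s₂ w X - w²)`, so `A₃ = -(s₁ + s₂ w)`, `A₁ = -w² conj A₃` and
`A₂ = w (s₁ s₂ - 2 Re w)`. As `(c w)² = -1`, the first period condition forces `A₃ = 0` and the
second, `cw = ±i` being purely imaginary, forces `s₁ s₂ = 2 Re w`. Real and imaginary parts of
`s₁ + s₂ w = 0` then give `Re w = 0` and `s₁ = s₂ = 0`, i.e. `r₁ = r₂ = 1`, `w = ±i` and `c = ±1`.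
-/

theorem X_sub_C_mul_X_add_C_one_div_conj {r : ℝ} (hr : r ≠ 0) {w : ℂ} (hw : ‖w‖ = 1) :
    (X - C (r * w)) * (X + C (1 / conj (r * w))) =
      X ^ 2 - C (((r - r⁻¹ : ℝ) : ℂ) * w) * X - C (w ^ 2) := by
  have hr0 : (r : ℂ) ≠ 0 := Complex.ofReal_ne_zero.mpr hr
  have hconj : 1 / conj ((r : ℂ) * w) = (r : ℂ)⁻¹ * w := by
    rw [map_mul, Complex.conj_ofReal, ← Complex.inv_eq_conj hw, one_div, mul_inv, inv_inv]
  have hprod : (r * w) * ((r : ℂ)⁻¹ * w) = w ^ 2 := by field_simp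
  rw [hconj, ← hprod]
  push_cast
  simp only [map_sub, map_mul]
  ring

theorem coeff_quadratic_mul_quadratic {R : Type*} [CommRing R] (p q u v : R) :
    ((X ^ 2 - C p * X - C q) * (X ^ 2 - C u * X - C v)).coeff 1 = p * v + q * u ∧
    ((X ^ 2 - C p * X - C q) * (X ^ 2 - C u * X - C v)).coeff 2 = p * u - q - v ∧
    ((X ^ 2 - C p * X - C q) * (X ^ 2 - C u * X - C v)).coeff 3 = -(p + u) := by
  have expand : (X ^ 2 - C p * X - C q) * (X ^ 2 - C u * X - C v) =
      X ^ 4 - C (p + u) * X ^ 3 + C (p * u - q - v) * X ^ 2 + C (p * v + q * u) * X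
        + C (q * v) := by
    simp only [map_add, map_sub, map_mul]; ring
  rw [expand]
  refine ⟨?_, ?_, ?_⟩ <;>
    simp only [coeff_add, coeff_sub, coeff_C_mul_X_pow, coeff_C_mul_X, coeff_X_pow, coeff_C] <;>
    norm_num

section UnitModulus

variable {c w : ℂ}

theorem add_ofReal_mul_eq_zero_of_conj_eq (s₁ s₂ : ℝ) (hc : ‖c‖ = 1) (hw : ‖w‖ = 1)
    (hcw : (c * w) ^ 2 = -1)
    (h : conj (c * (s₁ * w ^ 2 + s₂ * w)) = -(c * -(s₁ + s₂ * w))) :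
    (s₁ : ℂ) + s₂ * w = 0 := by
  have hc0 : c ≠ 0 := ne_zero_of_norm_ne_zero (hc ▸ one_ne_zero)
  have hw0 : w ≠ 0 := ne_zero_of_norm_ne_zero (hw ▸ one_ne_zero)
  simp only [map_mul, map_add, map_pow, Complex.conj_ofReal, ← Complex.inv_eq_conj hc,
    ← Complex.inv_eq_conj hw] at h
  field_simp at h
  linear_combination (h + (s₁ + s₂ * w) * hcw) / 2

theorem mul_eq_two_re_of_im_eq_zero (s₁ s₂ : ℝ) (hw : ‖w‖ = 1) (hcw : (c * w) ^ 2 = -1)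
    (h : (c * (s₁ * (s₂ * w) - 1 - w ^ 2)).im = 0) :
    s₁ * s₂ = 2 * w.re := by
  have hw0 : w ≠ 0 := ne_zero_of_norm_ne_zero (hw ▸ one_ne_zero)
  have hfactor : c * (s₁ * (s₂ * w) - 1 - w ^ 2) = (c * w) * ((s₁ * s₂ - 2 * w.re : ℝ) : ℂ) := by
    have := Complex.add_conj w
    rw [← Complex.inv_eq_conj hw] at this
    push_cast at this ⊢
    rw [← this]
    field_simp
    ring
  have hI : c * w = Complex.I ∨ c * w = -Complex.I := by
    rw [← sq_eq_sq_iff_eq_or_eq_neg, Complex.I_sq, hcw]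
  rw [hfactor] at h
  rcases hI with hI | hI <;> simp [hI] at h <;> linarith

theorem eq_zero_of_add_ofReal_mul_eq_zero {s₁ s₂ : ℝ} (hw : ‖w‖ = 1)
    (hsum : (s₁ : ℂ) + s₂ * w = 0) (hprod : s₁ * s₂ = 2 * w.re) :
    s₁ = 0 ∧ s₂ = 0 ∧ w.re = 0 := by
  have hre : s₁ + s₂ * w.re = 0 := by simpa using congrArg Complex.re hsum
  have him : s₂ * w.im = 0 := by simpa using congrArg Complex.im hsum
  have hwre : w.re = 0 := by
    have h0 : (s₂ ^ 2 + 2) * w.re = 0 := by linear_combination s₂ * hre - hprod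
    exact (mul_eq_zero.mp h0).resolve_left (by positivity)
  have hwim : w.im ≠ 0 := by
    intro h0
    have := Complex.normSq_eq_norm_sq w
    rw [hw, Complex.normSq_apply, hwre, h0] at this
    norm_num at this
  have hs₂ : s₂ = 0 := (mul_eq_zero.mp him).resolve_right hwim
  exact ⟨by simpa [hs₂] using hre, hs₂, hwre⟩

theorem eq_one_of_sub_inv_eq_zero {r : ℝ} (hr : 0 < r) (h : r - r⁻¹ = 0) : r = 1 := by
  field_simp at h
  nlinarith

theorem sq_eq_neg_one_of_re_eq_zero (hw : ‖w‖ = 1) (h : w.re = 0) : w ^ 2 = -1 := by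
  have hw0 : w ≠ 0 := ne_zero_of_norm_ne_zero (hw ▸ one_ne_zero)
  have := Complex.add_conj w
  rw [← Complex.inv_eq_conj hw, h] at this
  field_simp at this
  push_cast at this
  linear_combination this

end UnitModulus

theorem henneberg_unique_complexity_one
    (r₁ r₂ : ℝ) (hr₁ : 0 < r₁) (hr₂ : 0 < r₂) (θ₂ β : ℝ)
    (c a₁ a₂ : ℂ)
    (hc : c = Complex.exp (β * Complex.I))
    (ha₁ : a₁ = (r₁ : ℂ))
    (ha₂ : a₂ = (r₂ : ℂ) * Complex.exp (θ₂ * Complex.I))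
    (P : Polynomial ℂ)
    (hP : P = (X - C a₁) * (X + C (1 / (starRingEnd ℂ) a₁)) *
      (X - C a₂) * (X + C (1 / (starRingEnd ℂ) a₂)))
    (h1 : (starRingEnd ℂ) (c * P.coeff 1) = -(c * P.coeff 3))
    (h2 : (c * P.coeff 2).im = 0)
    (h3 : Complex.exp (2 * (β + θ₂) * Complex.I) = -1) :
    r₁ = 1 ∧ r₂ = 1 ∧
    (Complex.exp (θ₂ * Complex.I) = Complex.I ∨
      Complex.exp (θ₂ * Complex.I) = -Complex.I) ∧
    (c = 1 ∨ c = -1) := by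
  set w := Complex.exp (θ₂ * Complex.I)
  have hc1 : ‖c‖ = 1 := hc ▸ Complex.norm_exp_ofReal_mul_I β
  have hw1 : ‖w‖ = 1 := Complex.norm_exp_ofReal_mul_I θ₂
  have hcw : (c * w) ^ 2 = -1 := by
    rw [← h3, hc, ← Complex.exp_add, ← Complex.exp_nat_mul]
    push_cast
    ring_nf
  have hfactor₁ := X_sub_C_mul_X_add_C_one_div_conj hr₁.ne' norm_one
  rw [mul_one, mul_one, one_pow] at hfactor₁
  rw [hP, ha₁, ha₂, hfactor₁, mul_assoc, X_sub_C_mul_X_add_C_one_div_conj hr₂.ne' hw1] at h1 h2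
  obtain ⟨hA₁, hA₂, hA₃⟩ := coeff_quadratic_mul_quadratic
    ((r₁ - r₁⁻¹ : ℝ) : ℂ) 1 (((r₂ - r₂⁻¹ : ℝ) : ℂ) * w) (w ^ 2)
  rw [hA₁, hA₃, one_mul] at h1
  rw [hA₂] at h2
  obtain ⟨hs₁, hs₂, hre⟩ := eq_zero_of_add_ofReal_mul_eq_zero hw1
    (add_ofReal_mul_eq_zero_of_conj_eq _ _ hc1 hw1 hcw h1)
    (mul_eq_two_re_of_im_eq_zero _ _ hw1 hcw h2)
  have hw2 : w ^ 2 = -1 := sq_eq_neg_one_of_re_eq_zero hw1 hre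
  refine ⟨eq_one_of_sub_inv_eq_zero hr₁ hs₁, eq_one_of_sub_inv_eq_zero hr₂ hs₂, ?_, ?_⟩
  · rwa [← sq_eq_sq_iff_eq_or_eq_neg, Complex.I_sq]
  · rw [← sq_eq_one_iff]
    linear_combination -hcw + c ^ 2 * hw2
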